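/- Let 𝔖 = (X, 𝒰, φ) be a dynamical system with inputs. If 𝔖 is uniformly globally stable and has the weak asymptotic gain property, then there exist σ, γ ∈ 𝒦 and a function β : X × 𝒰 × [0,∞) → [0,∞) with β(x₀,u,·) ∈ ℒ whenever x₀ ≠ 0, such that for all (x₀,u) ∈ X × 𝒰 and all t ≥ 0 one has ‖φ(t,x₀,u)‖ ≤ β(x₀,u,t) + γ(‖u‖_𝒰) and β(x₀,u,t) ≤ σ(‖x₀‖). -/

import Mathlib

open MeasureTheory Filter Set Topology
open scoped ENNReal NNReal

noncomputable section

/-- The class `𝒦` of comparison functions: continuous, strictly increasing functions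
`γ : [0,∞) → [0,∞)` with `γ 0 = 0` (modelled on `ℝ` via conditions on `Ici 0`). -/
def ClassK (γ : ℝ → ℝ) : Prop :=
  ContinuousOn γ (Ici 0) ∧ StrictMonoOn γ (Ici 0) ∧ γ 0 = 0 ∧ ∀ r : ℝ, 0 ≤ r → 0 ≤ γ r

/-- The class `𝒦 ∪ {0}`. -/
def ClassKZero (γ : ℝ → ℝ) : Prop := ClassK γ ∨ ∀ r : ℝ, γ r = 0

/-- The class `ℒ` of comparison functions: continuous, strictly decreasing functions
`β : [0,∞) → [0,∞)` with `β r → 0` as `r → ∞`. -/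
def ClassL (β : ℝ → ℝ) : Prop :=
  ContinuousOn β (Ici 0) ∧ StrictAntiOn β (Ici 0) ∧ (∀ r : ℝ, 0 ≤ r → 0 ≤ β r) ∧
    Tendsto β atTop (nhds 0)

/-- A (forward-complete) dynamical system with inputs `𝔖 = (X, 𝒰, φ)`. Inputs are
functions `u : ℝ → U` (only the values on `[0,∞)` matter), `inNorm` is the norm `‖·‖_𝒰`. -/
structure DynSysWithInputs (X : Type*) [NormedAddCommGroup X] (U : Type*) where
  inputs : Set (ℝ → U)
  inputs_nonempty : inputs.Nonempty
  inNorm : (ℝ → U) → ℝ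
  inNorm_nonneg : ∀ u ∈ inputs, 0 ≤ inNorm u
  flow : ℝ → X → (ℝ → U) → X
  shift_mem : ∀ u ∈ inputs, ∀ τ : ℝ, 0 ≤ τ → (fun s => u (s + τ)) ∈ inputs
  shift_norm_le : ∀ u ∈ inputs, ∀ τ : ℝ, 0 ≤ τ → inNorm (fun s => u (s + τ)) ≤ inNorm u
  concat_mem : ∀ u₁ ∈ inputs, ∀ u₂ ∈ inputs, ∀ τ : ℝ, 0 ≤ τ →
    (fun s => if s < τ then u₁ s else u₂ (s - τ)) ∈ inputs
  flow_zero : ∀ (x₀ : X), ∀ u ∈ inputs, flow 0 x₀ u = x₀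
  cocycle : ∀ (x₀ : X), ∀ u ∈ inputs, ∀ s t : ℝ, 0 ≤ s → 0 ≤ t →
    flow (t + s) x₀ u = flow t (flow s x₀ u) (fun r => u (r + s))
  flow_continuous : ∀ (x₀ : X), ∀ u ∈ inputs, ContinuousOn (fun t => flow t x₀ u) (Ici 0)
  causal : ∀ (x₀ : X), ∀ u₁ ∈ inputs, ∀ u₂ ∈ inputs, ∀ τ : ℝ, 0 ≤ τ →
    (∀ s ∈ Icc (0:ℝ) τ, u₁ s = u₂ s) → ∀ t ∈ Icc (0:ℝ) τ, flow t x₀ u₁ = flow t x₀ u₂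

variable {X U : Type*} [NormedAddCommGroup X]

/-- Uniform global stability with explicit gains `σ`, `γ`. -/
def UGSWith (S : DynSysWithInputs X U) (σ γ : ℝ → ℝ) : Prop :=
  ∀ (x₀ : X), ∀ u ∈ S.inputs, ∀ t : ℝ, 0 ≤ t →
    ‖S.flow t x₀ u‖ ≤ σ ‖x₀‖ + γ (S.inNorm u)

/-- Uniform global stability. -/
def UGS (S : DynSysWithInputs X U) : Prop :=
  ∃ σ γ : ℝ → ℝ, ClassK σ ∧ ClassK γ ∧ UGSWith S σ γ

/-- The weak asymptotic gain property with gain `γ`. -/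
def WeakAGWith (S : DynSysWithInputs X U) (γ : ℝ → ℝ) : Prop :=
  ∀ ε : ℝ, 0 < ε → ∀ (x₀ : X), ∀ u ∈ S.inputs, ∃ τ : ℝ, 0 ≤ τ ∧
    ∀ t : ℝ, τ ≤ t → ‖S.flow t x₀ u‖ ≤ ε + γ (S.inNorm u)

/-- The weak asymptotic gain property (for some gain in `𝒦 ∪ {0}`). -/
def WeakAG (S : DynSysWithInputs X U) : Prop :=
  ∃ γ : ℝ → ℝ, ClassKZero γ ∧ WeakAGWith S γ

/-- The strong asymptotic gain property with gain `γ`. -/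
def StrongAGWith (S : DynSysWithInputs X U) (γ : ℝ → ℝ) : Prop :=
  ∀ ε : ℝ, 0 < ε → ∀ (x₀ : X), ∃ τ : ℝ, 0 ≤ τ ∧
    ∀ t : ℝ, τ ≤ t → ∀ u ∈ S.inputs, ‖S.flow t x₀ u‖ ≤ ε + γ (S.inNorm u)

/-- The strong asymptotic gain property. -/
def StrongAG (S : DynSysWithInputs X U) : Prop :=
  ∃ γ : ℝ → ℝ, ClassKZero γ ∧ StrongAGWith S γ

/-- The uniform asymptotic gain property with gain `γ`. -/
def UniformAGWith (S : DynSysWithInputs X U) (γ : ℝ → ℝ) : Prop :=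
  ∀ ε : ℝ, 0 < ε → ∀ r : ℝ, 0 < r → ∃ τ : ℝ, 0 ≤ τ ∧
    ∀ t : ℝ, τ ≤ t → ∀ (x₀ : X), ‖x₀‖ ≤ r → ∀ u ∈ S.inputs,
      ‖S.flow t x₀ u‖ ≤ ε + γ (S.inNorm u)

/-- The uniform asymptotic gain property. -/
def UniformAG (S : DynSysWithInputs X U) : Prop :=
  ∃ γ : ℝ → ℝ, ClassKZero γ ∧ UniformAGWith S γ

/-- The weak limit property with gain `γ`. -/
def WeakLimitWith (S : DynSysWithInputs X U) (γ : ℝ → ℝ) : Prop :=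
  ∀ ε : ℝ, 0 < ε → ∀ (x₀ : X), ∀ u ∈ S.inputs, ∃ τ : ℝ, 0 ≤ τ ∧
    sInf ((fun t => ‖S.flow t x₀ u‖) '' Icc (0:ℝ) τ) ≤ ε + γ (S.inNorm u)

/-- The weak limit property. -/
def WeakLimit (S : DynSysWithInputs X U) : Prop :=
  ∃ γ : ℝ → ℝ, ClassK γ ∧ WeakLimitWith S γ

/-- Weak input-to-state stability. -/
def WeakISS (S : DynSysWithInputs X U) : Prop := UGS S ∧ WeakAG S

/-- Strong input-to-state stability. -/
def StrongISS (S : DynSysWithInputs X U) : Prop := UGS S ∧ StrongAG S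

/-- Uniform input-to-state stability. -/
def UniformISS (S : DynSysWithInputs X U) : Prop := UGS S ∧ UniformAG S

/-!
Fix `(x₀, u)`, let `σ, γ₀` be the gains of uniform global stability, `γ₁` the weak asymptotic
gain, `γ = γ₀ + γ₁` and `g s = max 0 (‖φ(s, x₀, u)‖ - γ ‖u‖)`. Stability gives
`0 ≤ g ≤ σ ‖x₀‖` and the weak asymptotic gain gives `g → 0`. The supremum of `g` over `[t, ∞)`
is antitone, bounded by `σ ‖x₀‖` and tends to `0`; its average over `[t - 1, t]` is moreover
continuous, and adding `σ ‖x₀‖ e^{-t}` makes it strictly decreasing when `x₀ ≠ 0`. This is `β`,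
and it stays below `2 σ ‖x₀‖`.
-/

namespace ClassK

variable {f g : ℝ → ℝ}

lemma pos (hf : ClassK f) {r : ℝ} (hr : 0 < r) : 0 < f r :=
  hf.2.2.1 ▸ hf.2.1 self_mem_Ici hr.le hr

lemma add (hf : ClassK f) (hg : ClassK g) : ClassK (f + g) :=
  ⟨hf.1.add hg.1, fun _ ha _ hb hab => add_lt_add (hf.2.1 ha hb hab) (hg.2.1 ha hb hab),
    by simp [hf.2.2.1, hg.2.2.1], fun r hr => add_nonneg (hf.2.2.2 r hr) (hg.2.2.2 r hr)⟩

lemma add_classKZero (hf : ClassK f) (hg : ClassKZero g) : ClassK (f + g) := by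
  rcases hg with hg | hg
  · exact hf.add hg
  · simpa [Pi.add_def, hg] using hf

end ClassK

lemma ClassKZero.nonneg {g : ℝ → ℝ} (hg : ClassKZero g) {r : ℝ} (hr : 0 ≤ r) : 0 ≤ g r := by
  rcases hg with hg | hg
  · exact hg.2.2.2 r hr
  · exact (hg r).ge

section TailSup

variable {g : ℝ → ℝ} {c t : ℝ}

def tailSup (g : ℝ → ℝ) (t : ℝ) : ℝ := sSup (g '' Ici (max t 0))

lemma tailSup_le_of_le (h : ∀ s, max t 0 ≤ s → g s ≤ c) : tailSup g t ≤ c :=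
  csSup_le (nonempty_Ici.image g) (by rintro _ ⟨s, hs, rfl⟩; exact h s hs)

lemma tailSup_le (hgc : ∀ s, 0 ≤ s → g s ≤ c) (t : ℝ) : tailSup g t ≤ c :=
  tailSup_le_of_le fun s hs => hgc s ((le_max_right t 0).trans hs)

lemma bddAbove_image_Ici_max (hgc : ∀ s, 0 ≤ s → g s ≤ c) (t : ℝ) :
    BddAbove (g '' Ici (max t 0)) :=
  ⟨c, by rintro _ ⟨s, hs, rfl⟩; exact hgc s ((le_max_right t 0).trans hs)⟩

lemma le_tailSup (hgc : ∀ s, 0 ≤ s → g s ≤ c) (ht : 0 ≤ t) : g t ≤ tailSup g t :=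
  le_csSup (bddAbove_image_Ici_max hgc t) ⟨t, by simp [ht], rfl⟩

lemma tailSup_nonneg (hg0 : ∀ s, 0 ≤ s → 0 ≤ g s) (hgc : ∀ s, 0 ≤ s → g s ≤ c) (t : ℝ) :
    0 ≤ tailSup g t :=
  (hg0 _ (le_max_right t 0)).trans <|
    le_csSup (bddAbove_image_Ici_max hgc t) ⟨max t 0, self_mem_Ici, rfl⟩

lemma antitone_tailSup (hgc : ∀ s, 0 ≤ s → g s ≤ c) : Antitone (tailSup g) := fun a _ hab =>
  csSup_le_csSup (bddAbove_image_Ici_max hgc a) (nonempty_Ici.image g)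
    (image_mono (Ici_subset_Ici.2 (max_le_max hab le_rfl)))

lemma tendsto_tailSup_zero (hg0 : ∀ s, 0 ≤ s → 0 ≤ g s) (hgc : ∀ s, 0 ≤ s → g s ≤ c)
    (hlim : Tendsto g atTop (𝓝 0)) : Tendsto (tailSup g) atTop (𝓝 0) := by
  refine tendsto_order.2 ⟨fun a ha => .of_forall fun t => ha.trans_le
    (tailSup_nonneg hg0 hgc t), fun a ha => ?_⟩
  obtain ⟨N, hN⟩ := eventually_atTop.1 ((tendsto_order.1 hlim).2 (a / 2) (half_pos ha))
  refine eventually_atTop.2 ⟨N, fun t ht => ?_⟩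
  have : tailSup g t ≤ a / 2 :=
    tailSup_le_of_le fun s hs => (hN s (ht.trans ((le_max_left t 0).trans hs))).le
  linarith

end TailSup

section WindowAvg

def windowAvg (m : ℝ → ℝ) (t : ℝ) : ℝ := ∫ s in (t - 1)..t, m s

lemma integral_sub_one_const (c t : ℝ) : ∫ _ in (t - 1)..t, c = c := by
  simp

namespace Antitone

variable {m : ℝ → ℝ}

lemma le_windowAvg (hm : Antitone m) (t : ℝ) : m t ≤ windowAvg m t :=
  calc m t = ∫ _ in (t - 1)..t, m t := (integral_sub_one_const _ _).symm
    _ ≤ windowAvg m t := intervalIntegral.integral_mono_on (by linarith)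
        intervalIntegrable_const hm.intervalIntegrable fun _ hs => hm hs.2

lemma windowAvg_le (hm : Antitone m) (t : ℝ) : windowAvg m t ≤ m (t - 1) :=
  calc windowAvg m t ≤ ∫ _ in (t - 1)..t, m (t - 1) :=
        intervalIntegral.integral_mono_on (by linarith) hm.intervalIntegrable
          intervalIntegrable_const fun _ hs => hm hs.1
    _ = m (t - 1) := integral_sub_one_const _ _

lemma antitone_windowAvg (hm : Antitone m) : Antitone (windowAvg m) := by
  intro a b hab
  calc windowAvg m b = ∫ s in (a - 1)..a, m (s + (b - a)) := by
        rw [windowAvg, intervalIntegral.integral_comp_add_right]; congr 1 <;> ring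
    _ ≤ windowAvg m a := intervalIntegral.integral_mono_on (by linarith)
        (hm.comp_monotone (monotone_id.add_const _)).intervalIntegrable hm.intervalIntegrable
        fun _ _ => hm (by linarith)

lemma continuous_windowAvg (hm : Antitone m) : Continuous (windowAvg m) := by
  have hF := intervalIntegral.continuous_primitive 
    (fun a b => (hm.intervalIntegrable : IntervalIntegrable m volume a b)) 0
  have : windowAvg m = fun t => (∫ s in (0 : ℝ)..t, m s) - ∫ s in (0 : ℝ)..(t - 1), m s := by
    funext t
    exact (intervalIntegral.integral_interval_sub_left hm.intervalIntegrable
      hm.intervalIntegrable).symm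
  rw [this]
  exact hF.sub (hF.comp (continuous_id.sub continuous_const))

lemma tendsto_windowAvg (hm : Antitone m) {l : ℝ} (hlim : Tendsto m atTop (𝓝 l)) :
    Tendsto (windowAvg m) atTop (𝓝 l) :=
  tendsto_of_tendsto_of_tendsto_of_le_of_le hlim
    (hlim.comp (tendsto_atTop_add_const_right _ (-1) tendsto_id)) hm.le_windowAvg hm.windowAvg_le

end Antitone

end WindowAvg

section ClassLMajorant

variable {g : ℝ → ℝ} {c t : ℝ}

/-- Averaging over `[t - 1, t]` makes the antitone tail supremum continuous; the exponential
term makes the result strictly decreasing when `c > 0`. -/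
def classLMajorant (g : ℝ → ℝ) (c t : ℝ) : ℝ := windowAvg (tailSup g) t + c * Real.exp (-t)

lemma classLMajorant_nonneg (hg0 : ∀ s, 0 ≤ s → 0 ≤ g s) (hgc : ∀ s, 0 ≤ s → g s ≤ c)
    (t : ℝ) : 0 ≤ classLMajorant g c t := by
  have hc : 0 ≤ c := (hg0 0 le_rfl).trans (hgc 0 le_rfl)
  have := (tailSup_nonneg hg0 hgc t).trans ((antitone_tailSup hgc).le_windowAvg t)
  unfold classLMajorant
  positivity

lemma le_classLMajorant (hg0 : ∀ s, 0 ≤ s → 0 ≤ g s) (hgc : ∀ s, 0 ≤ s → g s ≤ c)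
    (ht : 0 ≤ t) : g t ≤ classLMajorant g c t := by
  have hc : 0 ≤ c := (hg0 0 le_rfl).trans (hgc 0 le_rfl)
  calc g t ≤ tailSup g t := le_tailSup hgc ht
    _ ≤ windowAvg (tailSup g) t := (antitone_tailSup hgc).le_windowAvg t
    _ ≤ classLMajorant g c t := le_add_of_nonneg_right (by positivity)

lemma classLMajorant_le (hg0 : ∀ s, 0 ≤ s → 0 ≤ g s) (hgc : ∀ s, 0 ≤ s → g s ≤ c)
    (ht : 0 ≤ t) : classLMajorant g c t ≤ 2 * c := by
  have hc : 0 ≤ c := (hg0 0 le_rfl).trans (hgc 0 le_rfl)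
  have hwin : windowAvg (tailSup g) t ≤ c :=
    ((antitone_tailSup hgc).windowAvg_le t).trans (tailSup_le hgc _)
  have hexp : c * Real.exp (-t) ≤ c :=
    mul_le_of_le_one_right hc (Real.exp_le_one_iff.2 (neg_nonpos.2 ht))
  unfold classLMajorant
  linarith

lemma classL_classLMajorant (hg0 : ∀ s, 0 ≤ s → 0 ≤ g s) (hgc : ∀ s, 0 ≤ s → g s ≤ c)
    (hlim : Tendsto g atTop (𝓝 0)) (hc : 0 < c) : ClassL (classLMajorant g c) := by
  have hm := antitone_tailSup hgc
  refine ⟨?_, fun a _ b _ hab => ?_, fun t _ => classLMajorant_nonneg hg0 hgc t, ?_⟩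
  · exact (hm.continuous_windowAvg.add
      (continuous_const.mul (Real.continuous_exp.comp continuous_neg))).continuousOn
  · exact add_lt_add_of_le_of_lt (hm.antitone_windowAvg hab.le)
      (mul_lt_mul_of_pos_left (Real.exp_lt_exp.2 (neg_lt_neg hab)) hc)
  · have h := (hm.tendsto_windowAvg (tendsto_tailSup_zero hg0 hgc hlim)).add
      (Real.tendsto_exp_neg_atTop_nhds_zero.const_mul c)
    rwa [mul_zero, add_zero] at h

end ClassLMajorant

namespace DynSysWithInputs

variable (S : DynSysWithInputs X U)

def excess (γ : ℝ → ℝ) (x₀ : X) (u : ℝ → U) (s : ℝ) : ℝ :=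
  max 0 (‖S.flow s x₀ u‖ - γ (S.inNorm u))

lemma norm_flow_le_excess_add (γ : ℝ → ℝ) (x₀ : X) (u : ℝ → U) (s : ℝ) :
    ‖S.flow s x₀ u‖ ≤ S.excess γ x₀ u s + γ (S.inNorm u) :=
  sub_le_iff_le_add.1 (le_max_right _ _)

end DynSysWithInputs

section Gains

variable {S : DynSysWithInputs X U} {σ γ γ' : ℝ → ℝ}

lemma UGSWith.mono (h : UGSWith S σ γ) (hγ : ∀ r, 0 ≤ r → γ r ≤ γ' r) : UGSWith S σ γ' :=
  fun x₀ u hu t ht => (h x₀ u hu t ht).trans (by gcongr; exact hγ _ (S.inNorm_nonneg u hu))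

lemma WeakAGWith.mono (h : WeakAGWith S γ) (hγ : ∀ r, 0 ≤ r → γ r ≤ γ' r) :
    WeakAGWith S γ' := fun ε hε x₀ u hu =>
  let ⟨τ, hτ, hle⟩ := h ε hε x₀ u hu
  ⟨τ, hτ, fun t ht => (hle t ht).trans (by gcongr; exact hγ _ (S.inNorm_nonneg u hu))⟩

lemma UGSWith.excess_le (h : UGSWith S σ γ) {x₀ : X} (hσ : 0 ≤ σ ‖x₀‖) {u : ℝ → U}
    (hu : u ∈ S.inputs) {s : ℝ} (hs : 0 ≤ s) : S.excess γ x₀ u s ≤ σ ‖x₀‖ :=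
  max_le hσ (sub_le_iff_le_add.2 (h x₀ u hu s hs))

lemma WeakAGWith.tendsto_excess (h : WeakAGWith S γ) (x₀ : X) {u : ℝ → U} (hu : u ∈ S.inputs) :
    Tendsto (S.excess γ x₀ u) atTop (𝓝 0) := by
  refine tendsto_order.2 ⟨fun a ha => .of_forall fun s => ha.trans_le (le_max_left _ _),
    fun a ha => ?_⟩
  obtain ⟨τ, -, hτ⟩ := h (a / 2) (half_pos ha) x₀ u hu
  refine eventually_atTop.2 ⟨τ, fun s hs => ?_⟩
  have := hτ s hs
  exact max_lt ha (by linarith)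

end Gains

/-- If `𝔖` is uniformly globally stable and has the weak asymptotic gain
property, then there are `σ, γ ∈ 𝒦` and `β : X × 𝒰 × [0,∞) → [0,∞)` with `β(x₀,u,·) ∈ ℒ`
for `x₀ ≠ 0` such that `‖φ(t,x₀,u)‖ ≤ β(x₀,u,t) + γ(‖u‖_𝒰)` and `β(x₀,u,t) ≤ σ(‖x₀‖)`
for all `(x₀,u) ∈ X × 𝒰` and `t ≥ 0`. -/
theorem ugs_weakAG_implies_beta_estimate
    (S : DynSysWithInputs X U) (hUGS : UGS S) (hWAG : WeakAG S) :
    ∃ (σ γ : ℝ → ℝ) (β : X → (ℝ → U) → ℝ → ℝ),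
      ClassK σ ∧ ClassK γ ∧
      (∀ (x₀ : X), ∀ u ∈ S.inputs, x₀ ≠ 0 → ClassL (β x₀ u)) ∧
      (∀ (x₀ : X), ∀ u ∈ S.inputs, ∀ t : ℝ, 0 ≤ t → 0 ≤ β x₀ u t) ∧
      ∀ (x₀ : X), ∀ u ∈ S.inputs, ∀ t : ℝ, 0 ≤ t →
        ‖S.flow t x₀ u‖ ≤ β x₀ u t + γ (S.inNorm u) ∧ β x₀ u t ≤ σ ‖x₀‖ := by
  obtain ⟨σ, γ₀, hσ, hγ₀, hUGS⟩ := hUGS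
  obtain ⟨γ₁, hγ₁, hWAG⟩ := hWAG
  have hUGS' : UGSWith S σ (γ₀ + γ₁) :=
    hUGS.mono fun r hr => le_add_of_nonneg_right (hγ₁.nonneg hr)
  have hWAG' : WeakAGWith S (γ₀ + γ₁) :=
    hWAG.mono fun r hr => le_add_of_nonneg_left (hγ₀.2.2.2 r hr)
  have hg0 : ∀ x₀ u s, 0 ≤ s → 0 ≤ S.excess (γ₀ + γ₁) x₀ u s := fun _ _ _ _ => le_max_left _ _
  have hgc : ∀ x₀, ∀ u ∈ S.inputs, ∀ s, 0 ≤ s → S.excess (γ₀ + γ₁) x₀ u s ≤ σ ‖x₀‖ :=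
    fun x₀ _ hu _ => hUGS'.excess_le (hσ.2.2.2 _ (norm_nonneg x₀)) hu
  refine ⟨σ + σ, γ₀ + γ₁, fun x₀ u => classLMajorant (S.excess (γ₀ + γ₁) x₀ u) (σ ‖x₀‖),
    hσ.add hσ, hγ₀.add_classKZero hγ₁, fun x₀ u hu hx₀ => ?_, fun x₀ u hu t _ => ?_,
    fun x₀ u hu t ht => ⟨?_, ?_⟩⟩
  · exact classL_classLMajorant (hg0 x₀ u) (hgc x₀ u hu)
      (hWAG'.tendsto_excess x₀ hu) (hσ.pos (norm_pos_iff.2 hx₀))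
  · exact classLMajorant_nonneg (hg0 x₀ u) (hgc x₀ u hu) t
  · exact (S.norm_flow_le_excess_add _ x₀ u t).trans
      (by gcongr; exact le_classLMajorant (hg0 x₀ u) (hgc x₀ u hu) ht)
  · simpa [two_mul] using classLMajorant_le (hg0 x₀ u) (hgc x₀ u hu) ht
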